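/- arXiv:2211.14909 — 8 statements merged into one kernel-verified Lean document; each statement's English description precedes it below -/
import Mathlib

section
/- Let G be a finite connected graph on n ≥ 2 vertices in which every vertex has degree at most 4. Then the vertex set can be partitioned into two nonempty parts A and B, each inducing a connected subgraph, such that (n-1)/4 ≤ |A| ≤ (3n+1)/4. -/
namespace BBaux

open Finset

variable {V : Type*} [Fintype V] [DecidableEq V] {p : V → V} {d : V → ℕ} {r : V}

/-- descendants of `v` under parent map `p` -/
noncomputable def Desc (p : V → V) (v : V) : Finset V :=
  @Finset.filter _ (fun w => ∃ k, p^[k] w = v) (Classical.decPred _) Finset.univ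

lemma mem_Desc {v w : V} : w ∈ Desc p v ↔ ∃ k, p^[k] w = v := by
  simp [Desc]

lemma self_mem_Desc (v : V) : v ∈ Desc p v := mem_Desc.2 ⟨0, rfl⟩

/-- children of `v` -/
noncomputable def Children (p : V → V) (v : V) : Finset V :=
  @Finset.filter _ (fun c => p c = v ∧ c ≠ v) (Classical.decPred _) Finset.univ

lemma mem_Children {v c : V} : c ∈ Children p v ↔ p c = v ∧ c ≠ v := by
  simp [Children]

section hyps

variable (hr : p r = r) (hd : ∀ v, v ≠ r → d (p v) < d v)

include hr hd

lemma d_p_le (w : V) : d (p w) ≤ d w := by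
  by_cases h : w = r
  · subst h; rw [hr]
  · exact (hd w h).le

lemma d_iter_le (k : ℕ) (w : V) : d (p^[k] w) ≤ d w := by
  induction k with
  | zero => simp
  | succ k ih =>
    rw [Function.iterate_succ_apply']
    exact (d_p_le hr hd _).trans ih

lemma d_iter_lt {v : V} (hv : v ≠ r) {k : ℕ} (hk : 1 ≤ k) : d (p^[k] v) < d v := by
  obtain ⟨m, rfl⟩ := Nat.exists_eq_add_of_le hk
  rw [add_comm, Function.iterate_add_apply, Function.iterate_one]
  exact lt_of_le_of_lt (d_iter_le hr hd m (p v)) (hd v hv)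

lemma reach_root (w : V) : ∃ k, p^[k] w = r := by
  generalize hdw : d w = m
  induction m using Nat.strong_induction_on generalizing w with
  | _ m ih =>
    by_cases h : w = r
    · exact ⟨0, by simp [h]⟩
    · obtain ⟨k, hk⟩ := ih (d (p w)) (hdw ▸ hd w h) (p w) rfl
      exact ⟨k + 1, by rw [Function.iterate_succ_apply, hk]⟩

lemma iter_root (k : ℕ) : p^[k] r = r := Function.iterate_fixed hr k

lemma root_notMem_Desc {v : V} (hv : v ≠ r) : r ∉ Desc p v := by
  rw [mem_Desc]
  rintro ⟨k, hk⟩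
  rw [iter_root hr hd] at hk
  exact hv hk.symm

lemma child_ne_root {v c : V} (hc : c ∈ Children p v) : c ≠ r := by
  rw [mem_Children] at hc
  rintro rfl
  exact hc.2 (hr.symm.trans hc.1)

lemma d_lt_child {v c : V} (hc : c ∈ Children p v) : d v < d c := by
  have h1 := hd c (child_ne_root hr hd hc)
  rwa [(mem_Children.1 hc).1] at h1

lemma Desc_subset {u v : V} (h : u ∈ Desc p v) : Desc p u ⊆ Desc p v := by
  obtain ⟨k, hk⟩ := mem_Desc.1 h
  intro w hw
  obtain ⟨j, hj⟩ := mem_Desc.1 hw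
  exact mem_Desc.2 ⟨k + j, by rw [Function.iterate_add_apply, hj, hk]⟩

lemma child_mem_Desc {v c : V} (hc : c ∈ Children p v) : c ∈ Desc p v :=
  mem_Desc.2 ⟨1, by simp [(mem_Children.1 hc).1]⟩

lemma notMem_Desc_child {v c : V} (hc : c ∈ Children p v) : v ∉ Desc p c := by
  rw [mem_Desc]
  rintro ⟨k, hk⟩
  rcases Nat.eq_zero_or_pos k with rfl | hkpos
  · exact (mem_Children.1 hc).2 (by simpa using hk.symm)
  · by_cases hv : v = r
    · exact child_ne_root hr hd hc (by rw [← hk, hv, iter_root hr hd])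
    · have h1 : d (p^[k] v) < d v := d_iter_lt hr hd hv hkpos
      rw [hk] at h1
      exact absurd (d_lt_child hr hd hc) (by omega)

lemma child_iter_eq {v c c' : V} (hc : c ∈ Children p v) (hc' : c' ∈ Children p v)
    {m : ℕ} (h : p^[m] c = c') : c = c' := by
  rcases Nat.eq_zero_or_pos m with rfl | hm
  · simpa using h
  · exfalso
    obtain ⟨j, rfl⟩ := Nat.exists_eq_add_of_le hm
    rw [add_comm, Function.iterate_add_apply, Function.iterate_one,
      (mem_Children.1 hc).1] at h
    by_cases hv : v = r
    · exact child_ne_root hr hd hc' (by rw [← h, hv, iter_root hr hd])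
    · rcases Nat.eq_zero_or_pos j with rfl | hj
      · have h0 : v = c' := by simpa using h
        exact (mem_Children.1 hc').2 h0.symm
      · have h1 : d (p^[j] v) < d v := d_iter_lt hr hd hv hj
        rw [h] at h1
        exact absurd (d_lt_child hr hd hc') (by omega)

lemma Desc_children_disjoint {v : V} {c c' : V} (hc : c ∈ Children p v)
    (hc' : c' ∈ Children p v) (hne : c ≠ c') : Disjoint (Desc p c) (Desc p c') := by
  rw [Finset.disjoint_left]
  intro w hw hw'
  obtain ⟨k, hk⟩ := mem_Desc.1 hw
  obtain ⟨j, hj⟩ := mem_Desc.1 hw'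
  apply hne
  rcases le_total k j with h | h
  · obtain ⟨m, rfl⟩ := Nat.exists_eq_add_of_le h
    rw [add_comm, Function.iterate_add_apply, hk] at hj
    exact child_iter_eq hr hd hc hc' hj
  · obtain ⟨m, rfl⟩ := Nat.exists_eq_add_of_le h
    rw [add_comm, Function.iterate_add_apply, hj] at hk
    exact (child_iter_eq hr hd hc' hc hk).symm

lemma Desc_decomp (v : V) :
    Desc p v = insert v ((Children p v).biUnion (Desc p)) := by
  apply Finset.Subset.antisymm
  · intro w hw
    by_cases hwv : w = v
    · exact hwv ▸ Finset.mem_insert_self _ _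
    · obtain ⟨k, hk⟩ := mem_Desc.1 hw
      have hex : ∃ k, p^[k] w = v := ⟨k, hk⟩
      classical
      have hk0 : Nat.find hex ≠ 0 := by
        intro h0
        exact hwv (by simpa [h0] using Nat.find_spec hex)
      set m := Nat.find hex with hm
      have hms : p^[m] w = v := Nat.find_spec hex
      set c := p^[m - 1] w with hcdef
      have hpc : p c = v := by
        have h' : p^[(m - 1) + 1] w = v := by
          rw [Nat.sub_add_cancel (Nat.one_le_iff_ne_zero.2 hk0)]; exact hms
        rw [Function.iterate_succ_apply'] at h'
        exact h'
      have hcv : c ≠ v := by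
        intro h
        exact absurd (hcdef ▸ h) (Nat.find_min hex (by omega))
      refine Finset.mem_insert_of_mem (Finset.mem_biUnion.2 ⟨c, mem_Children.2 ⟨hpc, hcv⟩, ?_⟩)
      exact mem_Desc.2 ⟨m - 1, rfl⟩
  · intro w hw
    rcases Finset.mem_insert.1 hw with rfl | hw
    · exact self_mem_Desc w
    · obtain ⟨c, hc, hwc⟩ := Finset.mem_biUnion.1 hw
      exact Desc_subset hr hd (child_mem_Desc hr hd hc) hwc

lemma card_Desc (v : V) :
    (Desc p v).card = 1 + ∑ c ∈ Children p v, (Desc p c).card := by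
  have hnot : v ∉ (Children p v).biUnion (Desc p) := by
    rw [Finset.mem_biUnion]
    rintro ⟨c, hc, hvc⟩
    exact notMem_Desc_child hr hd hc hvc
  rw [Desc_decomp hr hd v, Finset.card_insert_of_notMem hnot,
    Finset.card_biUnion (fun c hc c' hc' hne => Desc_children_disjoint hr hd hc hc' hne)]
  omega

lemma Desc_root : Desc p r = Finset.univ := by
  apply Finset.eq_univ_of_forall
  intro w
  exact mem_Desc.2 (reach_root hr hd w)

lemma child_lt_card {v c : V} (hc : c ∈ Children p v) :
    (Desc p c).card < (Desc p v).card := by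
  apply Finset.card_lt_card
  rw [Finset.ssubset_iff_of_subset (Desc_subset hr hd (child_mem_Desc hr hd hc))]
  exact ⟨v, self_mem_Desc v, notMem_Desc_child hr hd hc⟩

end hyps

end BBaux

open BBaux Finset

theorem stmt2 {V : Type*} [Fintype V] (G : SimpleGraph V) [DecidableRel G.Adj]
    (hconn : G.Connected) (hdeg : ∀ v : V, G.degree v ≤ 4)
    (n : ℕ) (hn : Fintype.card V = n) (h2 : 2 ≤ n) :
    ∃ A B : Set V, A.Nonempty ∧ B.Nonempty ∧ A ∪ B = Set.univ ∧ A ∩ B = ∅ ∧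
      (G.induce A).Connected ∧ (G.induce B).Connected ∧
      ((n : ℝ) - 1) / 4 ≤ (Nat.card A : ℝ) ∧ (Nat.card A : ℝ) ≤ (3 * (n : ℝ) + 1) / 4 := by
  classical
  have hne : Nonempty V := Fintype.card_pos_iff.1 (by omega)
  obtain ⟨r⟩ := hne
  -- a parent step towards r
  have hstep : ∀ v : V, v ≠ r → ∃ u, G.Adj v u ∧ G.dist r u < G.dist r v := by
    intro v hv
    obtain ⟨w, hw⟩ := (hconn.preconnected v r).exists_walk_length_eq_dist
    cases w with
    | nil => exact absurd rfl hv
    | @cons _ u _ h q =>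
      refine ⟨u, h, ?_⟩
      have h1 : G.dist r u ≤ q.length := by
        rw [SimpleGraph.dist_comm]; exact SimpleGraph.dist_le q
      have h2 : G.dist r v = q.length + 1 := by
        rw [SimpleGraph.dist_comm, ← hw, SimpleGraph.Walk.length_cons]
      omega
  set d : V → ℕ := fun v => G.dist r v with hddef
  let p : V → V := fun v => if h : v = r then r else Classical.choose (hstep v h)
  have hr : p r = r := by simp [p]
  have hpadj : ∀ v, v ≠ r → G.Adj v (p v) := by
    intro v hv
    simpa [p, hv] using (Classical.choose_spec (hstep v hv)).1
  have hd : ∀ v, v ≠ r → d (p v) < d v := by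
    intro v hv
    simpa [p, hv] using (Classical.choose_spec (hstep v hv)).2
  -- children are neighbors
  have hchild_nbr : ∀ v : V, Children p v ⊆ G.neighborFinset v := by
    intro v c hc
    rw [SimpleGraph.mem_neighborFinset]
    have h1 := (hpadj c (child_ne_root hr hd hc)).symm
    rwa [(mem_Children.1 hc).1] at h1
  have hchild_card4 : ∀ v : V, (Children p v).card ≤ 4 := fun v =>
    le_trans (Finset.card_le_card (hchild_nbr v)) (by rw [SimpleGraph.card_neighborFinset_eq_degree]; exact hdeg v)
  have hchild_card3 : ∀ v : V, v ≠ r → (Children p v).card ≤ 3 := by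
    intro v hv
    have hpv : p v ∉ Children p v := by
      rw [mem_Children]
      rintro ⟨h1, h2⟩
      by_cases hpr : p v = r
      · exact hv (by rw [← h1, hpr, hr])
      · have := hd (p v) hpr
        rw [h1] at this
        exact absurd (hd v hv) (by omega)
    have hsub : Children p v ⊆ (G.neighborFinset v).erase (p v) := by
      intro c hc
      exact Finset.mem_erase.2 ⟨fun h => hpv (h ▸ hc), hchild_nbr v hc⟩
    have hpvmem : p v ∈ G.neighborFinset v := by
      rw [SimpleGraph.mem_neighborFinset]; exact hpadj v hv
    have := Finset.card_le_card hsub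
    rw [Finset.card_erase_of_mem hpvmem, SimpleGraph.card_neighborFinset_eq_degree] at this
    have := hdeg v
    omega
  -- sum over root children
  have hsum_root : ∑ c ∈ Children p r, (Desc p c).card = n - 1 := by
    have h1 : (Desc p r).card = n := by
      rw [Desc_root hr hd, Finset.card_univ, hn]
    have h2 := card_Desc hr hd r
    omega
  -- candidate set
  set S : Finset V := Finset.univ.filter (fun v => v ≠ r ∧ n - 1 ≤ 4 * (Desc p v).card) with hSdef
  have hSne : S.Nonempty := by
    by_contra hS
    rw [Finset.not_nonempty_iff_eq_empty] at hS
    have hall : ∀ c ∈ Children p r, 4 * (Desc p c).card ≤ n - 2 := by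
      intro c hc
      have hcr : c ≠ r := child_ne_root hr hd hc
      have : c ∉ S := by rw [hS]; exact Finset.notMem_empty c
      rw [hSdef, Finset.mem_filter] at this
      push_neg at this
      have := this (Finset.mem_univ c) hcr
      omega
    have hsum4 : 4 * ∑ c ∈ Children p r, (Desc p c).card ≤ (Children p r).card * (n - 2) := by
      rw [Finset.mul_sum]
      calc ∑ c ∈ Children p r, 4 * (Desc p c).card ≤ ∑ _c ∈ Children p r, (n - 2) :=
            Finset.sum_le_sum hall
        _ = (Children p r).card * (n - 2) := by rw [Finset.sum_const, smul_eq_mul]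
    have hc4 := hchild_card4 r
    rw [hsum_root] at hsum4
    have : (Children p r).card * (n - 2) ≤ 4 * (n - 2) :=
      Nat.mul_le_mul_right _ hc4
    omega
  obtain ⟨v, hvS, hvmin⟩ := S.exists_min_image (fun v => (Desc p v).card) hSne
  rw [hSdef, Finset.mem_filter] at hvS
  obtain ⟨-, hvr, hvlow⟩ := hvS
  -- upper bound on (Desc p v).card
  have hvchild : ∀ c ∈ Children p v, 4 * (Desc p c).card ≤ n - 2 := by
    intro c hc
    have hlt : (Desc p c).card < (Desc p v).card := child_lt_card hr hd hc
    have hcS : c ∉ S := by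
      intro hcS
      exact absurd (hvmin c hcS) (by omega)
    rw [hSdef, Finset.mem_filter] at hcS
    push_neg at hcS
    have := hcS (Finset.mem_univ c) (child_ne_root hr hd hc)
    omega
  have hvhigh : 4 * (Desc p v).card ≤ 3 * n - 2 := by
    have h1 := card_Desc hr hd v
    have hsum4 : 4 * ∑ c ∈ Children p v, (Desc p c).card ≤ (Children p v).card * (n - 2) := by
      rw [Finset.mul_sum]
      calc ∑ c ∈ Children p v, 4 * (Desc p c).card ≤ ∑ _c ∈ Children p v, (n - 2) :=
            Finset.sum_le_sum hvchild
        _ = (Children p v).card * (n - 2) := by rw [Finset.sum_const, smul_eq_mul]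
    have hc3 := hchild_card3 v hvr
    have : (Children p v).card * (n - 2) ≤ 3 * (n - 2) := Nat.mul_le_mul_right _ hc3
    omega
  -- define the partition
  set A : Set V := ↑(Desc p v) with hAdef
  refine ⟨A, Aᶜ, ⟨v, by simpa [hAdef] using self_mem_Desc v⟩,
    ⟨r, by simpa [hAdef] using root_notMem_Desc hr hd hvr⟩,
    Set.union_compl_self A, Set.inter_compl_self A, ?_, ?_, ?_, ?_⟩
  · -- A connected
    have key : ∀ k (w : V), p^[k] w = v → ∀ (hw : w ∈ A),
        (G.induce A).Reachable ⟨w, hw⟩ ⟨v, by simpa [hAdef] using self_mem_Desc v⟩ := by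
      intro k
      induction k with
      | zero =>
        intro w hwv hw
        have hwv' : w = v := by simpa using hwv
        subst hwv'
        exact SimpleGraph.Reachable.refl _
      | succ k ih =>
        intro w hwv hw
        by_cases hwv' : w = v
        · subst hwv'
          exact SimpleGraph.Reachable.refl _
        · have hwr : w ≠ r := by
            rintro rfl
            exact hvr ((iter_root hr hd (k+1)) ▸ hwv).symm
          have hpw : p^[k] (p w) = v := by
            rw [← Function.iterate_succ_apply]; exact hwv
          have hpwA : p w ∈ A := by simpa [hAdef] using mem_Desc.2 ⟨k, hpw⟩
          have hadj : (G.induce A).Adj ⟨w, hw⟩ ⟨p w, hpwA⟩ := hpadj w hwr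
          exact hadj.reachable.trans (ih (p w) hpw hpwA)
    rw [SimpleGraph.connected_iff]
    constructor
    · rintro ⟨a, ha⟩ ⟨b, hb⟩
      have ha' : a ∈ Desc p v := by simpa [hAdef] using ha
      have hb' : b ∈ Desc p v := by simpa [hAdef] using hb
      obtain ⟨ka, hka⟩ := mem_Desc.1 ha'
      obtain ⟨kb, hkb⟩ := mem_Desc.1 hb'
      exact (key ka a hka ha).trans (key kb b hkb hb).symm
    · exact ⟨⟨v, by simpa [hAdef] using self_mem_Desc v⟩⟩
  · -- Aᶜ connected
    have hrB : r ∈ Aᶜ := by simpa [hAdef] using root_notMem_Desc hr hd hvr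
    have hclosed : ∀ w : V, w ∈ Aᶜ → p w ∈ Aᶜ := by
      intro w hw hpw
      apply hw
      have : p w ∈ Desc p v := by simpa [hAdef] using hpw
      obtain ⟨k, hk⟩ := mem_Desc.1 this
      have : w ∈ Desc p v := mem_Desc.2 ⟨k + 1, by rw [Function.iterate_succ_apply, hk]⟩
      simpa [hAdef] using this
    have key : ∀ k (w : V), p^[k] w = r → ∀ (hw : w ∈ Aᶜ),
        (G.induce Aᶜ).Reachable ⟨w, hw⟩ ⟨r, hrB⟩ := by
      intro k
      induction k with
      | zero =>
        intro w hwv hw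
        have hwv' : w = r := by simpa using hwv
        subst hwv'
        exact SimpleGraph.Reachable.refl _
      | succ k ih =>
        intro w hwv hw
        by_cases hwr : w = r
        · subst hwr
          exact SimpleGraph.Reachable.refl _
        · have hpw : p^[k] (p w) = r := by
            rw [← Function.iterate_succ_apply]; exact hwv
          have hpwB : p w ∈ Aᶜ := hclosed w hw
          have hadj : (G.induce Aᶜ).Adj ⟨w, hw⟩ ⟨p w, hpwB⟩ := hpadj w hwr
          exact hadj.reachable.trans (ih (p w) hpw hpwB)
    rw [SimpleGraph.connected_iff]
    constructor
    · rintro ⟨a, ha⟩ ⟨b, hb⟩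
      obtain ⟨ka, hka⟩ := reach_root hr hd a
      obtain ⟨kb, hkb⟩ := reach_root hr hd b
      exact (key ka a hka ha).trans (key kb b hkb hb).symm
    · exact ⟨⟨r, hrB⟩⟩
  · -- lower bound
    have hcard : Nat.card A = (Desc p v).card := by
      rw [hAdef, Nat.card_coe_set_eq, Set.ncard_coe_finset]
    rw [hcard]
    rw [div_le_iff₀ (by norm_num : (0:ℝ) < 4)]
    have h1 : (n : ℝ) - 1 ≤ ((4 * (Desc p v).card : ℕ) : ℝ) := by
      have : ((n - 1 : ℕ) : ℝ) ≤ ((4 * (Desc p v).card : ℕ) : ℝ) := Nat.cast_le.2 hvlow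
      rw [Nat.cast_sub (by omega : 1 ≤ n)] at this
      simpa using this
    push_cast at h1 ⊢
    linarith
  · -- upper bound
    have hcard : Nat.card A = (Desc p v).card := by
      rw [hAdef, Nat.card_coe_set_eq, Set.ncard_coe_finset]
    rw [hcard]
    rw [le_div_iff₀ (by norm_num : (0:ℝ) < 4)]
    have h1 : 4 * (((Desc p v).card : ℕ) : ℝ) ≤ 3 * (n : ℝ) - 2 := by
      have : ((4 * (Desc p v).card : ℕ) : ℝ) ≤ ((3 * n - 2 : ℕ) : ℝ) := Nat.cast_le.2 hvhigh
      rw [Nat.cast_sub (by omega : 2 ≤ 3 * n)] at this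
      push_cast at this
      linarith
    push_cast at h1 ⊢
    linarith
end

section
/- Let T be a finite rooted tree with n ≥ 2 vertices in which the root has at most 4 children while every other vertex has at most 3 children. Then some subtree (the set of descendants of some vertex, including itself) has size ℓ with (n-1)/4 ≤ ℓ ≤ (3n+1)/4. -/
/-- The subtree at `v`: all vertices that reach `v` by iterating `parent`. -/
def descendants {V : Type*} (parent : V → V) (v : V) : Set V :=
  {u | ∃ k : ℕ, parent^[k] u = v}

theorem stmt3 {V : Type*} [Fintype V] [DecidableEq V]
    (parent : V → V) (root : V)
    (hroot : parent root = root)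
    (hreach : ∀ v : V, ∃ k : ℕ, parent^[k] v = root)
    (hchildroot : Nat.card {u : V | parent u = root ∧ u ≠ root} ≤ 4)
    (hchild : ∀ v : V, v ≠ root → Nat.card {u : V | parent u = v ∧ u ≠ v} ≤ 3)
    (n : ℕ) (hn : Fintype.card V = n) (h2 : 2 ≤ n) :
    ∃ v : V, ((n : ℝ) - 1) / 4 ≤ (Nat.card (descendants parent v) : ℝ) ∧
      (Nat.card (descendants parent v) : ℝ) ≤ (3 * (n : ℝ) + 1) / 4 := by
  classical
  -- root is a fixed point of all iterates
  have hrootit : ∀ k : ℕ, parent^[k] root = root := fun k =>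
    Function.iterate_fixed hroot k
  -- any periodic point is the root
  have hcyc : ∀ (v : V) (k : ℕ), parent^[k+1] v = v → v = root := by
    intro v k hk
    obtain ⟨m, hm⟩ := hreach v
    have ht : ∀ t : ℕ, parent^[(k+1)*t] v = v := by
      intro t
      induction t with
      | zero => simp
      | succ t ih =>
        rw [Nat.mul_succ, Function.iterate_add_apply, hk, ih]
    have hle : m ≤ (k+1)*m := Nat.le_mul_of_pos_left m (Nat.succ_pos k)
    calc v = parent^[(k+1)*m] v := (ht m).symm
      _ = parent^[(k+1)*m - m] (parent^[m] v) := by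
          rw [← Function.iterate_add_apply, Nat.sub_add_cancel hle]
      _ = root := by rw [hm, hrootit]
  -- finite subtrees as Finsets
  set Df : V → Finset V := fun v => (Set.toFinite (descendants parent v)).toFinset
    with hDf
  have hmem : ∀ u v : V, u ∈ Df v ↔ ∃ k : ℕ, parent^[k] u = v := by
    intro u v
    simp [hDf, Set.Finite.mem_toFinset, descendants]
  have hcard : ∀ v : V, Nat.card (descendants parent v) = (Df v).card := by
    intro v
    rw [Nat.card_coe_set_eq, Set.ncard_eq_toFinset_card _ (Set.toFinite _)]
  have hself : ∀ v : V, v ∈ Df v := fun v => (hmem v v).2 ⟨0, rfl⟩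
  -- children finset
  set Cf : V → Finset V := fun v =>
    Finset.univ.filter (fun u => parent u = v ∧ u ≠ v) with hCf
  have hCfmem : ∀ u v : V, u ∈ Cf v ↔ parent u = v ∧ u ≠ v := by
    intro u v; simp [hCf]
  have hCfcard : ∀ v : V, (Cf v).card = Nat.card {u : V | parent u = v ∧ u ≠ v} := by
    intro v
    rw [Nat.card_coe_set_eq, Set.ncard_eq_toFinset_card' _]
    congr 1
    ext u
    simp [hCf]
  -- subtree of a child is contained in subtree of parent
  have hsub : ∀ u v : V, parent u = v → Df u ⊆ Df v := by
    intro u v hu w hw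
    obtain ⟨k, hk⟩ := (hmem w u).1 hw
    exact (hmem w v).2 ⟨k+1, by rw [Function.iterate_succ_apply', hk, hu]⟩
  -- v is not in the subtree of its child
  have hnotmem : ∀ u v : V, parent u = v → u ≠ v → v ∉ Df u := by
    intro u v hu hne hv
    obtain ⟨k, hk⟩ := (hmem v u).1 hv
    have : parent^[k+1] v = v := by rw [Function.iterate_succ_apply', hk, hu]
    have hvr : v = root := hcyc v k this
    subst hvr
    exact hne (by rw [← hk, hrootit])
  -- strict decrease for children
  have hlt : ∀ u v : V, u ∈ Cf v → (Df u).card < (Df v).card := by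
    intro u v hu
    obtain ⟨hp, hne⟩ := (hCfmem u v).1 hu
    exact Finset.card_lt_card ⟨hsub u v hp,
      fun hss => hnotmem u v hp hne (hss (hself v))⟩
  -- decomposition: every descendant of v is v or a descendant of a child
  have hdec : ∀ (k : ℕ) (w v : V), parent^[k] w = v →
      w = v ∨ ∃ u, u ∈ Cf v ∧ w ∈ Df u := by
    intro k
    induction k with
    | zero => intro w v hw; exact Or.inl hw
    | succ k ih =>
      intro w v hw
      rw [Function.iterate_succ_apply] at hw
      rcases ih (parent w) v hw with h | ⟨u, hu, hwu⟩
      · by_cases hwv : w = v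
        · exact Or.inl hwv
        · exact Or.inr ⟨w, (hCfmem w v).2 ⟨h, hwv⟩, hself w⟩
      · refine Or.inr ⟨u, hu, ?_⟩
        obtain ⟨j, hj⟩ := (hmem (parent w) u).1 hwu
        exact (hmem w u).2 ⟨j+1, by rw [Function.iterate_succ_apply]; exact hj⟩
  -- card inequality
  have hineq : ∀ v : V, (Df v).card ≤ 1 + ∑ u ∈ Cf v, (Df u).card := by
    intro v
    have hss : Df v ⊆ insert v ((Cf v).biUnion Df) := by
      intro w hw
      obtain ⟨k, hk⟩ := (hmem w v).1 hw
      rcases hdec k w v hk with h | ⟨u, hu, hwu⟩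
      · exact Finset.mem_insert.2 (Or.inl h)
      · exact Finset.mem_insert.2 (Or.inr (Finset.mem_biUnion.2 ⟨u, hu, hwu⟩))
    calc (Df v).card ≤ (insert v ((Cf v).biUnion Df)).card := Finset.card_le_card hss
      _ ≤ ((Cf v).biUnion Df).card + 1 := Finset.card_insert_le _ _
      _ ≤ (∑ u ∈ Cf v, (Df u).card) + 1 := by
          exact Nat.add_le_add_right (Finset.card_biUnion_le) 1
      _ = 1 + ∑ u ∈ Cf v, (Df u).card := by ring
  -- children are never the root
  have hchildne : ∀ u v : V, u ∈ Cf v → u ≠ root := by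
    intro u v hu hur
    obtain ⟨hp, hne⟩ := (hCfmem u v).1 hu
    subst hur
    exact hne (by rw [← hp, hroot])
  -- subtree of root is everything
  have hrootcard : (Df root).card = n := by
    have : Df root = Finset.univ := by
      ext u
      simp only [Finset.mem_univ, iff_true]
      exact (hmem u root).2 (hreach u)
    rw [this, Finset.card_univ, hn]
  -- main induction
  have main : ∀ N : ℕ, ∀ v : V, (Df v).card ≤ N →
      (v = root ∨ 3*n+1 < 4*(Df v).card) →
      ∃ w : V, n - 1 ≤ 4*(Df w).card ∧ 4*(Df w).card ≤ 3*n+1 := by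
    intro N
    induction N with
    | zero =>
      intro v hv _
      exact absurd (Finset.card_pos.2 ⟨v, hself v⟩) (by omega)
    | succ N ih =>
      intro v hv hcase
      by_cases hex : ∃ u ∈ Cf v, 3*n+1 < 4*(Df u).card
      · obtain ⟨u, hu, hbig⟩ := hex
        exact ih u (by have := hlt u v hu; omega) (Or.inr hbig)
      · push_neg at hex
        -- all children have small subtrees
        have hv2 : 2 ≤ (Df v).card := by
          rcases hcase with h | h
          · subst h; omega
          · omega
        have hne : (Cf v).Nonempty := by
          by_contra hemp
          rw [Finset.not_nonempty_iff_eq_empty] at hemp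
          have := hineq v
          rw [hemp, Finset.sum_empty] at this
          omega
        obtain ⟨u, hu, hmax⟩ := Finset.exists_max_image (Cf v) (fun u => (Df u).card) hne
        have hsum : ∑ w ∈ Cf v, (Df w).card ≤ (Cf v).card * (Df u).card :=
          Finset.sum_le_card_nsmul _ _ _ (fun w hw => hmax w hw)
        have husmall : 4*(Df u).card ≤ 3*n+1 := hex u hu
        have hvle : (Df v).card ≤ 1 + (Cf v).card * (Df u).card :=
          le_trans (hineq v) (by omega)
        by_cases hvr : v = root
        · -- root: at most 4 children
          have hc4 : (Cf v).card ≤ 4 := by rw [hvr, hCfcard]; exact hchildroot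
          have : n ≤ 1 + 4 * (Df u).card := by
            have hrc := hrootcard
            rw [← hvr] at hrc
            nlinarith [Nat.mul_le_mul_right ((Df u).card) hc4]
          exact ⟨u, by omega, husmall⟩
        · -- non-root: at most 3 children
          have hbig : 3*n+1 < 4*(Df v).card := by
            rcases hcase with h | h
            · exact absurd h hvr
            · exact h
          have hc3 : (Cf v).card ≤ 3 := by rw [hCfcard]; exact hchild v hvr
          have : (Df v).card ≤ 1 + 3 * (Df u).card := by
            nlinarith [Nat.mul_le_mul_right ((Df u).card) hc3]
          exact ⟨u, by omega, husmall⟩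
  obtain ⟨w, h1, h2'⟩ := main (Df root).card root le_rfl (Or.inl rfl)
  refine ⟨w, ?_, ?_⟩
  · rw [div_le_iff₀ (by norm_num), hcard]
    have : ((n - 1 : ℕ) : ℝ) ≤ ((4 * (Df w).card : ℕ) : ℝ) := Nat.cast_le.2 h1
    push_cast [Nat.cast_sub (by omega : 1 ≤ n)] at this
    linarith
  · rw [le_div_iff₀ (by norm_num), hcard]
    have : ((4 * (Df w).card : ℕ) : ℝ) ≤ ((3 * n + 1 : ℕ) : ℝ) := Nat.cast_le.2 h2'
    push_cast at this
    linarith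
end

section
/- Suppose P : ℕ → ℝ is positive, supermultiplicative (P(ℓ+m) ≥ P(ℓ)P(m) for ℓ,m ≥ 1), and for every n ≥ 2 there exists ℓ with (n-1)/4 ≤ ℓ ≤ (3n+1)/4 and P(n) ≤ 4n³·P(ℓ)·P(n-ℓ). Then there exist positive constants A and T such that for all n ≥ 1 and all ℓ with 0 < ℓ < n, P(n) ≤ A·n^{T·log n}·P(ℓ)·P(n-ℓ). -/
noncomputable def Tc : ℝ := 5 / Real.log (8 / 7)

lemma logc_pos : 0 < Real.log (8 / 7) := Real.log_pos (by norm_num)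

lemma Tc_pos : 0 < Tc := div_pos (by norm_num) logc_pos

lemma key (n m : ℕ) (hn : 2 ≤ n) (hm : 1 ≤ m) (hmn : (m : ℝ) ≤ 7 * n / 8) :
    4 * (n : ℝ) ^ 3 * (m : ℝ) ^ (Tc * Real.log m) ≤ (n : ℝ) ^ (Tc * Real.log n) := by
  have hn2 : (2 : ℝ) ≤ n := by exact_mod_cast hn
  have hm1 : (1 : ℝ) ≤ m := by exact_mod_cast hm
  have hn0 : (0 : ℝ) < n := by linarith
  have hm0 : (0 : ℝ) < m := by linarith
  have hc : 0 < Real.log (8 / 7) := logc_pos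
  set c := Real.log (8 / 7) with hcdef
  have hTc : Tc * c = 5 := by
    rw [Tc, div_mul_cancel₀]
    exact ne_of_gt hc
  have hlogm : Real.log m ≤ Real.log n - c := by
    have h1 : Real.log m ≤ Real.log (7 * n / 8) := by
      apply Real.log_le_log hm0 hmn
    have h2 : (7 * (n : ℝ) / 8) = n / (8 / 7) := by ring
    rw [h2, Real.log_div (ne_of_gt hn0) (by norm_num)] at h1
    linarith
  have hlogn0 : (0 : ℝ) ≤ Real.log n := Real.log_nonneg (by linarith)
  have hlogm0 : (0 : ℝ) ≤ Real.log m := Real.log_nonneg hm1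
  have key1 : c * Real.log n ≤ (Real.log n) ^ 2 - (Real.log m) ^ 2 := by
    nlinarith [mul_nonneg (show (0:ℝ) ≤ Real.log n - Real.log m - c by linarith) hlogn0,
      mul_nonneg (show (0:ℝ) ≤ Real.log n - Real.log m by linarith) hlogm0]
  rw [Real.rpow_def_of_pos hn0, Real.rpow_def_of_pos hm0]
  have h45 : 4 * (n : ℝ) ^ 3 ≤ (n : ℝ) ^ (5 : ℕ) := by
    nlinarith [mul_nonneg (pow_nonneg hn0.le 3) (show (0:ℝ) ≤ (n:ℝ)^2 - 4 by nlinarith)]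
  have h5 : ((n : ℝ)) ^ (5 : ℕ) = Real.exp (5 * Real.log n) := by
    rw [show (5:ℝ) * Real.log n = ((5:ℕ):ℝ) * Real.log n by norm_num, Real.exp_nat_mul,
      Real.exp_log hn0]
  have step : Real.exp (5 * Real.log n) * Real.exp (Real.log m * (Tc * Real.log m)) ≤
      Real.exp (Real.log n * (Tc * Real.log n)) := by
    rw [← Real.exp_add, Real.exp_le_exp]
    have := mul_le_mul_of_nonneg_left key1 (le_of_lt Tc_pos)
    nlinarith [hTc]
  calc 4 * (n : ℝ) ^ 3 * Real.exp (Real.log m * (Tc * Real.log m))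
      ≤ Real.exp (5 * Real.log n) * Real.exp (Real.log m * (Tc * Real.log m)) := by
        apply mul_le_mul_of_nonneg_right _ (Real.exp_pos _).le
        rw [← h5]; exact h45
    _ ≤ Real.exp (Real.log n * (Tc * Real.log n)) := step

theorem stmt4 (P : ℕ → ℝ) (hpos : ∀ n, 1 ≤ n → 0 < P n)
    (hsuper : ∀ ℓ m : ℕ, 1 ≤ ℓ → 1 ≤ m → P ℓ * P m ≤ P (ℓ + m))
    (hdec : ∀ n : ℕ, 2 ≤ n → ∃ ℓ : ℕ, ((n : ℝ) - 1) / 4 ≤ (ℓ : ℝ) ∧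
      (ℓ : ℝ) ≤ (3 * (n : ℝ) + 1) / 4 ∧ P n ≤ 4 * (n : ℝ) ^ 3 * P ℓ * P (n - ℓ)) :
    ∃ A T : ℝ, 0 < A ∧ 0 < T ∧ ∀ n ℓ : ℕ, 1 ≤ n → 0 < ℓ → ℓ < n →
      P n ≤ A * (n : ℝ) ^ (T * Real.log n) * P ℓ * P (n - ℓ) := by
  refine ⟨1, Tc, one_pos, Tc_pos, ?_⟩
  intro n
  induction n using Nat.strong_induction_on with
  | _ n IH =>
    intro ℓ hn1 hℓ hℓn
    rw [one_mul]
    have hn2 : 2 ≤ n := by omega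
    have hn2R : (2 : ℝ) ≤ n := by exact_mod_cast hn2
    obtain ⟨l', h1, h2, h3⟩ := hdec n hn2
    have hl'1 : 1 ≤ l' := by
      by_contra h
      have : l' = 0 := by omega
      rw [this] at h1
      push_cast at h1
      linarith
    have hl'n : l' < n := by
      have : (l' : ℝ) < n := by linarith
      exact_mod_cast this
    have hl'bd : (l' : ℝ) ≤ 7 * n / 8 := by linarith
    have hnl'bd : ((n - l' : ℕ) : ℝ) ≤ 7 * n / 8 := by
      rw [Nat.cast_sub hl'n.le]
      linarith
    have ha : 0 < P ℓ := hpos ℓ hℓ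
    have hb : 0 < P (n - ℓ) := hpos _ (by omega)
    have hN4 : 4 * (n : ℝ) ^ 3 ≤ (n : ℝ) ^ (Tc * Real.log n) := by
      have := key n 1 hn2 le_rfl (by push_cast; linarith)
      simpa using this
    rcases lt_trichotomy ℓ l' with h | h | h
    · -- ℓ < l'
      have hIH := IH l' hl'n ℓ hl'1 hℓ h
      rw [one_mul] at hIH
      have hsup := hsuper (l' - ℓ) (n - l') (by omega) (by omega)
      have e : (l' - ℓ) + (n - l') = n - ℓ := by omega
      rw [e] at hsup
      have hkey := key n l' hn2 hl'1 hl'bd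
      have hPl' : 0 < P l' := hpos _ hl'1
      have hPnl' : 0 < P (n - l') := hpos _ (by omega)
      have hPd : 0 < P (l' - ℓ) := hpos _ (by omega)
      set L := (l' : ℝ) ^ (Tc * Real.log l') with hL
      have hL0 : 0 < L := Real.rpow_pos_of_pos (by positivity) _
      set N := (n : ℝ) ^ (Tc * Real.log n) with hNdef
      calc P n ≤ 4 * (n : ℝ) ^ 3 * P l' * P (n - l') := h3
        _ ≤ 4 * (n : ℝ) ^ 3 * (L * P ℓ * P (l' - ℓ)) * P (n - l') := by
            apply mul_le_mul_of_nonneg_right _ hPnl'.le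
            apply mul_le_mul_of_nonneg_left hIH (by positivity)
        _ = (4 * (n : ℝ) ^ 3 * L) * P ℓ * (P (l' - ℓ) * P (n - l')) := by ring
        _ ≤ (4 * (n : ℝ) ^ 3 * L) * P ℓ * P (n - ℓ) := by
            apply mul_le_mul_of_nonneg_left hsup
            exact mul_nonneg (by positivity) ha.le
        _ ≤ N * P ℓ * P (n - ℓ) := by
            apply mul_le_mul_of_nonneg_right _ hb.le
            exact mul_le_mul_of_nonneg_right hkey ha.le
    · -- ℓ = l'
      subst h
      calc P n ≤ 4 * (n : ℝ) ^ 3 * P ℓ * P (n - ℓ) := h3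
        _ ≤ (n : ℝ) ^ (Tc * Real.log n) * P ℓ * P (n - ℓ) := by
            apply mul_le_mul_of_nonneg_right _ hb.le
            exact mul_le_mul_of_nonneg_right hN4 ha.le
    · -- l' < ℓ
      have hIH := IH (n - l') (by omega) (ℓ - l') (by omega) (by omega) (by omega)
      rw [one_mul] at hIH
      have e : (n - l') - (ℓ - l') = n - ℓ := by omega
      rw [e] at hIH
      have hsup := hsuper l' (ℓ - l') hl'1 (by omega)
      have e2 : l' + (ℓ - l') = ℓ := by omega
      rw [e2] at hsup
      have hkey := key n (n - l') hn2 (by omega) hnl'bd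
      have hPl' : 0 < P l' := hpos _ hl'1
      have hPnl' : 0 < P (n - l') := hpos _ (by omega)
      have hPd : 0 < P (ℓ - l') := hpos _ (by omega)
      set M := ((n - l' : ℕ) : ℝ) ^ (Tc * Real.log ((n - l' : ℕ) : ℝ)) with hM
      have hM0 : 0 < M := Real.rpow_pos_of_pos (by
        have : 1 ≤ n - l' := by omega
        positivity) _
      set N := (n : ℝ) ^ (Tc * Real.log n) with hNdef
      calc P n ≤ 4 * (n : ℝ) ^ 3 * P l' * P (n - l') := h3
        _ ≤ 4 * (n : ℝ) ^ 3 * P l' * (M * P (ℓ - l') * P (n - ℓ)) := by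
            apply mul_le_mul_of_nonneg_left hIH (by positivity)
        _ = (4 * (n : ℝ) ^ 3 * M) * (P l' * P (ℓ - l')) * P (n - ℓ) := by ring
        _ ≤ (4 * (n : ℝ) ^ 3 * M) * P ℓ * P (n - ℓ) := by
            apply mul_le_mul_of_nonneg_right _ hb.le
            exact mul_le_mul_of_nonneg_left hsup (by positivity)
        _ ≤ N * P ℓ * P (n - ℓ) := by
            apply mul_le_mul_of_nonneg_right _ hb.le
            exact mul_le_mul_of_nonneg_right hkey ha.le
end

section
/- Suppose s : ℕ → ℝ is a positive sequence that is weakly submultiplicative: for all ℓ, m, n ≥ 1 with ℓ + m = n and n/3 ≤ ℓ ≤ 2n/3 and n/3 ≤ m ≤ 2n/3, we have s(n) ≤ s(ℓ)·s(m). Then lim_{n→∞} s(n)^{1/n} exists and equals inf_{n≥1} s(n)^{1/n}. -/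
/-!
Passing to `a n = log (s n)`, the hypothesis becomes subadditivity restricted to balanced
splittings `ℓ + m` with `ℓ ≤ 2 m` and `m ≤ 2 ℓ`. This restricted form still suffices for
`a (q k + r) ≤ q a k + a r` whenever `k ≤ r ≤ 2 k`: cut off roughly half of the `q` blocks of
length `k` and induct. Hence `a n ≤ n a k / k + C_k`, so `limsup a n / n ≤ a k / k` for every `k`,
which together with the trivial bound `a n / n ≥ inf_k a k / k` gives the limit.
-/

open Filter Real

/-- For `n = ℓ + m`, the condition `ℓ ≤ 2 m ∧ m ≤ 2 ℓ` is `n / 3 ≤ ℓ, m ≤ 2 n / 3`. -/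
def BalancedSubadditive (a : ℕ → ℝ) : Prop :=
  ∀ ℓ m : ℕ, 1 ≤ ℓ → 1 ≤ m → ℓ ≤ 2 * m → m ≤ 2 * ℓ → a (ℓ + m) ≤ a ℓ + a m

namespace BalancedSubadditive

variable {a : ℕ → ℝ}

theorem le_mul_add (ha : BalancedSubadditive a) {k : ℕ} (hk : 1 ≤ k) (q : ℕ) {r : ℕ}
    (hkr : k ≤ r) (hr : r ≤ 2 * k) : a (q * k + r) ≤ q * a k + a r := by
  induction q using Nat.strong_induction_on generalizing r with
  | _ q ih =>
    rcases Nat.eq_zero_or_pos q with rfl | hq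
    · simp
    -- `q₀ + 1 ∈ {p + 1, p + 2}` keeps the pieces `(q₀ + 1) k` and `p k + r` balanced.
    obtain ⟨q₀, p, rfl, hpq₀, hq₀p⟩ : ∃ q₀ p, q = (q₀ + 1) + p ∧ p ≤ q₀ ∧ q₀ ≤ p + 1 :=
      ⟨q / 2, q - (q / 2 + 1), by omega, by omega, by omega⟩
    have hsplit : (q₀ + 1 + p) * k + r = (q₀ * k + k) + (p * k + r) := by ring
    have hbal : a ((q₀ * k + k) + (p * k + r)) ≤ a (q₀ * k + k) + a (p * k + r) :=
      ha _ _ (by nlinarith) (by nlinarith) (by nlinarith) (by nlinarith)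
    have hleft := ih q₀ (by omega) le_rfl (by omega)
    have hright := ih p (by omega) hkr hr
    rw [hsplit]
    push_cast
    linarith

theorem exists_le_mul_div_add (ha : BalancedSubadditive a) {k : ℕ} (hk : 1 ≤ k) :
    ∃ C, ∀ n, k ≤ n → a n ≤ n * (a k / k) + C := by
  refine ⟨(Finset.Icc k (2 * k)).sup' ⟨k, Finset.mem_Icc.2 ⟨le_rfl, by omega⟩⟩ fun r => a r - r * (a k / k),
    fun n hn => ?_⟩
  obtain ⟨d, hd⟩ : ∃ d, n / k = d + 1 := ⟨n / k - 1, by have := Nat.div_pos hn hk; omega⟩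
  set r := k + n % k
  have hr : r ∈ Finset.Icc k (2 * k) := by
    have := Nat.mod_lt n hk
    simp only [r, Finset.mem_Icc]
    omega
  obtain ⟨hkr, hr2k⟩ := Finset.mem_Icc.1 hr
  have hn : d * k + r = n := by
    have := Nat.div_add_mod n k
    rw [hd] at this
    simp only [r]
    linarith
  have hC := Finset.le_sup' (fun r => a r - r * (a k / k)) hr
  have hle := ha.le_mul_add hk d hkr hr2k
  have hdk : (d : ℝ) * a k = d * k * (a k / k) := by field_simp
  have hncast : (n : ℝ) = d * k + r := by exact_mod_cast hn.symm
  rw [hn] at hle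
  rw [hncast]
  linarith

theorem eventually_div_lt (ha : BalancedSubadditive a) {k : ℕ} (hk : 1 ≤ k) {b : ℝ}
    (hb : a k / k < b) : ∀ᶠ n : ℕ in atTop, a n / n < b := by
  obtain ⟨C, hC⟩ := ha.exists_le_mul_div_add hk
  have hlim : Tendsto (fun n : ℕ => a k / k + C / n) atTop (nhds (a k / k)) := by
    simpa using tendsto_const_nhds.add (tendsto_const_div_atTop_nhds_zero_nat C)
  filter_upwards [eventually_ge_atTop k, hlim.eventually_lt_const hb] with n hkn hlt
  have hn : (0 : ℝ) < n := by norm_cast; omega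
  calc a n / n ≤ a k / k + C / n := by
        rw [div_le_iff₀ hn, add_mul, div_mul_cancel₀ _ hn.ne']
        linarith [hC n hkn]
    _ < b := hlt

end BalancedSubadditive

theorem balancedSubadditive_log {s : ℕ → ℝ} (hpos : ∀ n, 1 ≤ n → 0 < s n)
    (hsub : ∀ ℓ m : ℕ, 1 ≤ ℓ → 1 ≤ m → ℓ ≤ 2 * m → m ≤ 2 * ℓ → s (ℓ + m) ≤ s ℓ * s m) :
    BalancedSubadditive fun n => log (s n) := fun ℓ m hℓ hm h₁ h₂ => by
  rw [← log_mul (hpos ℓ hℓ).ne' (hpos m hm).ne']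
  exact log_le_log (hpos _ (by omega)) (hsub ℓ m hℓ hm h₁ h₂)

theorem stmt5 (s : ℕ → ℝ) (hpos : ∀ n, 1 ≤ n → 0 < s n)
    (hsub : ∀ ℓ m n : ℕ, 1 ≤ ℓ → 1 ≤ m → ℓ + m = n →
      (n : ℝ) / 3 ≤ (ℓ : ℝ) → (ℓ : ℝ) ≤ 2 * (n : ℝ) / 3 →
      (n : ℝ) / 3 ≤ (m : ℝ) → (m : ℝ) ≤ 2 * (n : ℝ) / 3 →
      s n ≤ s ℓ * s m) :
    Filter.Tendsto (fun n : ℕ => s n ^ (1 / (n : ℝ))) Filter.atTop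
      (nhds (⨅ n : {n : ℕ // 1 ≤ n}, s n ^ (1 / ((n : ℕ) : ℝ)))) := by
  have hlog : BalancedSubadditive fun n => log (s n) :=
    balancedSubadditive_log hpos fun ℓ m hℓ hm h₁ h₂ => by
      have h₁' : (ℓ : ℝ) ≤ 2 * m := by exact_mod_cast h₁
      have h₂' : (m : ℝ) ≤ 2 * ℓ := by exact_mod_cast h₂
      exact hsub ℓ m _ hℓ hm rfl (by push_cast; linarith) (by push_cast; linarith)
        (by push_cast; linarith) (by push_cast; linarith)
  have hexp : ∀ n, 1 ≤ n → s n ^ (1 / (n : ℝ)) = exp (log (s n) / n) := fun n hn => by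
    rw [rpow_def_of_pos (hpos n hn), mul_one_div]
  have hbdd : BddBelow (Set.range fun n : {n : ℕ // 1 ≤ n} => s n ^ (1 / ((n : ℕ) : ℝ))) :=
    ⟨0, by rintro _ ⟨n, rfl⟩; exact rpow_nonneg (hpos n n.2).le _⟩
  have : Nonempty {n : ℕ // 1 ≤ n} := ⟨⟨1, le_rfl⟩⟩
  refine tendsto_order.2 ⟨fun b hb => ?_, fun b hb => ?_⟩
  · filter_upwards [eventually_ge_atTop 1] with n hn
    exact hb.trans_le (ciInf_le hbdd ⟨n, hn⟩)
  · obtain ⟨⟨k, hk⟩, hkb⟩ := exists_lt_of_ciInf_lt hb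
    have hb0 : 0 < b := (rpow_pos_of_pos (hpos k hk) _).trans hkb
    rw [hexp k hk, ← lt_log_iff_exp_lt hb0] at hkb
    filter_upwards [eventually_ge_atTop 1, hlog.eventually_div_lt hk hkb] with n hn hlt
    rwa [hexp n hn, ← lt_log_iff_exp_lt hb0]
end

section
/- Suppose P : ℕ → ℝ is positive and there exist positive constants A, T such that P(n) ≤ A·n^{T·log n}·P(ℓ)·P(n-ℓ) for all 0 < ℓ < n, and suppose λ = lim P(n)^{1/n} exists and is positive. Then there exist positive constants A*, T* such that P(n) ≥ A*·n^{-T*·log n}·λ^n for all n ≥ 1. -/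
/-!
Put `f m = log P(m) - m log λ`. The hypothesis at `ℓ = m`, `n = 2m` gives the doubling inequality
`f(2m) ≤ 2 f(m) + log A + T log²(2m)`, and iterating it along `n, 2n, 4n, …` gives
`f(2ᵏn) / 2ᵏ ≤ f(n) + ∑_{j<k} (log A + T log²(2^{j+1} n)) / 2^{j+1}`. The errors grow only
polynomially in `j`, so the sum is `O(1 + log² n)` uniformly in `k`, while `f(2ᵏn) / 2ᵏ → 0`
because `P(m)^{1/m} → λ`. Hence `f(n) ≥ -O(1 + log² n)`, which is the claim after exponentiating.
-/

open Filter Real Finset Topology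

section Doubling

variable {f g : ℕ → ℝ}

theorem div_two_pow_le_of_doubling (hfg : ∀ m, 1 ≤ m → f (2 * m) ≤ 2 * f m + g m) {n : ℕ}
    (hn : 1 ≤ n) (k : ℕ) :
    f (2 ^ k * n) / 2 ^ k ≤ f n + ∑ j ∈ range k, g (2 ^ j * n) / 2 ^ (j + 1) := by
  induction k with
  | zero => simp
  | succ k ih =>
    have hdouble := hfg (2 ^ k * n) (Nat.one_le_iff_ne_zero.mpr (by positivity))
    rw [sum_range_succ, pow_succ' 2 k, mul_assoc]
    calc f (2 * (2 ^ k * n)) / 2 ^ (k + 1)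
        ≤ (2 * f (2 ^ k * n) + g (2 ^ k * n)) / 2 ^ (k + 1) := by gcongr
      _ = f (2 ^ k * n) / 2 ^ k + g (2 ^ k * n) / 2 ^ (k + 1) := by field_simp; ring
      _ ≤ _ := by linarith

theorem neg_le_of_doubling (hf : Tendsto (fun m : ℕ => f m / m) atTop (𝓝 0))
    (hfg : ∀ m, 1 ≤ m → f (2 * m) ≤ 2 * f m + g m) {n : ℕ} (hn : 1 ≤ n) {S : ℝ}
    (hS : ∀ k, ∑ j ∈ range k, g (2 ^ j * n) / 2 ^ (j + 1) ≤ S) : -S ≤ f n := by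
  have hn' : (0 : ℝ) < n := by exact_mod_cast hn
  have hsub : Tendsto (fun k : ℕ => f (2 ^ k * n) / ((2 ^ k * n : ℕ) : ℝ)) atTop (𝓝 0) :=
    hf.comp <| tendsto_atTop_mono (fun k => Nat.le_mul_of_pos_right _ hn)
      (tendsto_pow_atTop_atTop_of_one_lt one_lt_two)
  have hbound : ∀ k, f (2 ^ k * n) / ((2 ^ k * n : ℕ) : ℝ) ≤ (f n + S) / n := by
    intro k
    rw [Nat.cast_mul, Nat.cast_pow, Nat.cast_ofNat, ← div_div]
    gcongr
    exact (div_two_pow_le_of_doubling hfg hn k).trans (by linarith [hS k])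
  have := (le_div_iff₀ hn').mp (le_of_tendsto' hsub hbound)
  linarith

end Doubling

theorem summable_sq_succ_div_two_pow : Summable fun j : ℕ => ((j : ℝ) + 1) ^ 2 / 2 ^ (j + 1) := by
  have := (summable_nat_add_iff 1).mpr
    (summable_pow_mul_geometric_of_norm_lt_one 2 (r := (1 / 2 : ℝ)) (by norm_num))
  refine this.congr fun j => ?_
  push_cast
  rw [one_div, inv_pow, div_eq_mul_inv]

theorem sum_log_sq_div_two_pow_le (a : ℝ) {T : ℝ} (hT : 0 ≤ T) {n : ℕ} (hn : 1 ≤ n) (k : ℕ) :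
    ∑ j ∈ range k, (a + T * log ((2 * (2 ^ j * n) : ℕ) : ℝ) ^ 2) / 2 ^ (j + 1)
      ≤ (∑' j : ℕ, ((j : ℝ) + 1) ^ 2 / 2 ^ (j + 1)) * (|a| + T * (log 2 + log n) ^ 2) := by
  have hL : 0 ≤ log n := log_nonneg (by exact_mod_cast hn)
  have hlog2 : 0 ≤ log 2 := log_nonneg one_le_two
  have hterm : ∀ j : ℕ, a + T * log ((2 * (2 ^ j * n) : ℕ) : ℝ) ^ 2
      ≤ ((j : ℝ) + 1) ^ 2 * (|a| + T * (log 2 + log n) ^ 2) := by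
    intro j
    have hlog : log ((2 * (2 ^ j * n) : ℕ) : ℝ) = (j + 1) * log 2 + log n := by
      rw [← mul_assoc, ← pow_succ', Nat.cast_mul, Nat.cast_pow, Nat.cast_ofNat,
        log_mul (by positivity) (by positivity), log_pow]
      push_cast
      ring
    have hj : (1 : ℝ) ≤ (j + 1) ^ 2 := by nlinarith [(Nat.cast_nonneg j : (0 : ℝ) ≤ j)]
    have hsq : ((j + 1) * log 2 + log n) ^ 2 ≤ ((j : ℝ) + 1) ^ 2 * (log 2 + log n) ^ 2 := by
      rw [← mul_pow]
      gcongr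
      nlinarith [(Nat.cast_nonneg j : (0 : ℝ) ≤ j)]
    rw [hlog]
    nlinarith [le_abs_self a, abs_nonneg a, mul_le_mul_of_nonneg_left hsq hT]
  calc _ ≤ ∑ j ∈ range k, ((j : ℝ) + 1) ^ 2 / 2 ^ (j + 1) * (|a| + T * (log 2 + log n) ^ 2) :=
        sum_le_sum fun j _ => by
          rw [div_mul_eq_mul_div]
          gcongr
          exact hterm j
    _ = (∑ j ∈ range k, ((j : ℝ) + 1) ^ 2 / 2 ^ (j + 1)) * (|a| + T * (log 2 + log n) ^ 2) :=
        (sum_mul _ _ _).symm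
    _ ≤ _ := by
        gcongr
        exact summable_sq_succ_div_two_pow.sum_le_tsum _ fun _ _ => by positivity

theorem log_sub_mul_doubling {P : ℕ → ℝ} (hpos : ∀ n, 1 ≤ n → 0 < P n) {A T : ℝ} (hA : 0 < A)
    (hub : ∀ n ℓ : ℕ, 0 < ℓ → ℓ < n →
      P n ≤ A * (n : ℝ) ^ (T * Real.log n) * P ℓ * P (n - ℓ))
    (c : ℝ) {m : ℕ} (hm : 1 ≤ m) :
    log (P (2 * m)) - ((2 * m : ℕ) : ℝ) * c
      ≤ 2 * (log (P m) - m * c) + (log A + T * log ((2 * m : ℕ) : ℝ) ^ 2) := by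
  have h := hub (2 * m) m hm (by omega)
  rw [show 2 * m - m = m by omega] at h
  have hPm := hpos m hm
  have h2m : (0 : ℝ) < ((2 * m : ℕ) : ℝ) := by exact_mod_cast (by omega : 0 < 2 * m)
  have hlog := log_le_log (hpos _ (by omega)) h
  rw [log_mul (by positivity) hPm.ne', log_mul (by positivity) hPm.ne',
    log_mul hA.ne' (rpow_pos_of_pos h2m _).ne', log_rpow h2m] at hlog
  have hc : ((2 * m : ℕ) : ℝ) * c = 2 * (m * c) := by push_cast; ring
  nlinarith

theorem tendsto_log_sub_mul_log_div {P : ℕ → ℝ} (hpos : ∀ n, 1 ≤ n → 0 < P n) {lam : ℝ}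
    (hlam : 0 < lam)
    (hlim : Tendsto (fun n : ℕ => P n ^ (1 / (n : ℝ))) atTop (𝓝 lam)) :
    Tendsto (fun n : ℕ => (log (P n) - n * log lam) / n) atTop (𝓝 0) := by
  have hlog := ((continuousAt_log hlam.ne').tendsto.comp hlim).sub_const (log lam)
  rw [sub_self] at hlog
  refine hlog.congr' ?_
  filter_upwards [eventually_ge_atTop 1] with n hn
  have hn' : (n : ℝ) ≠ 0 := by positivity
  simp only [Function.comp_apply, log_rpow (hpos n hn)]
  field_simp

theorem stmt6 (P : ℕ → ℝ) (hpos : ∀ n, 1 ≤ n → 0 < P n)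
    (A T : ℝ) (hA : 0 < A) (hT : 0 < T)
    (hub : ∀ n ℓ : ℕ, 0 < ℓ → ℓ < n →
      P n ≤ A * (n : ℝ) ^ (T * Real.log n) * P ℓ * P (n - ℓ))
    (lam : ℝ) (hlam : 0 < lam)
    (hlim : Filter.Tendsto (fun n : ℕ => P n ^ (1 / (n : ℝ))) Filter.atTop (nhds lam)) :
    ∃ A' T' : ℝ, 0 < A' ∧ 0 < T' ∧ ∀ n : ℕ, 1 ≤ n →
      P n ≥ A' * (n : ℝ) ^ (-(T' * Real.log n)) * lam ^ n := by
  set c := ∑' j : ℕ, ((j : ℝ) + 1) ^ 2 / 2 ^ (j + 1)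
  have hc : 0 < c := summable_sq_succ_div_two_pow.tsum_pos (fun _ => by positivity) 0 (by norm_num)
  refine ⟨exp (-(c * (|log A| + 2 * T * log 2 ^ 2))), 2 * c * T, exp_pos _, by positivity,
    fun n hn => ?_⟩
  have hn' : (0 : ℝ) < n := by exact_mod_cast hn
  have hf : -(c * (|log A| + T * (log 2 + log n) ^ 2)) ≤ log (P n) - n * log lam :=
    neg_le_of_doubling (tendsto_log_sub_mul_log_div hpos hlam hlim)
      (fun m hm => log_sub_mul_doubling hpos hA hub (log lam) hm) hn
      (sum_log_sq_div_two_pow_le (log A) hT.le hn)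
  have hsq : (log 2 + log n) ^ 2 ≤ 2 * log 2 ^ 2 + 2 * log n ^ 2 := by
    nlinarith [sq_nonneg (log 2 - log n)]
  rw [ge_iff_le, ← exp_log (hpos n hn), rpow_def_of_pos hn', ← exp_log (pow_pos hlam n),
    ← exp_add, ← exp_add, exp_le_exp, log_pow]
  nlinarith [mul_le_mul_of_nonneg_left hsq (by positivity : 0 ≤ c * T)]
end

section
/- Fix n₀ ≥ 1 and suppose P, Q : ℕ → ℝ are nonnegative with P(0) = Q(0) = 1, P(n) = Σ_{i=1}^n Q(i)·P(n-i) for n ≥ 1, P(n) > 0 for all n, and Q(n)/P(n) ≤ Q(n₀)/P(n₀) =: R < 1 for all n > n₀. Define U : ℕ → ℝ by U(n) = P(n) for n ≤ n₀ and, for n > n₀, U(n) = (1/(1-R))·(Σ_{i=1}^{n₀} Q(i)·U(n-i) + Σ_{i=n₀+1}^{n-1} R·U(i)·U(n-i)). Then U(n) ≥ P(n) for all n ≥ 0. -/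
/-! Strong induction on `n`. For `n > n₀` split the recurrence for `P n` into the terms with
`i ≤ n₀`, those with `n₀ < i < n`, and the term `Q n * P 0 = Q n ≤ R * P n`. In the middle range
`Q i ≤ R * P i`, so by the induction hypothesis the first two parts are bounded by the two sums
defining `U n`, whence `(1 - R) * P n ≤ (1 - R) * U n`. -/

open Finset

theorem Finset.sum_Icc_one_eq_add_add {M : Type*} [AddCommMonoid M] (f : ℕ → M) {n₀ n : ℕ}
    (h : n₀ < n) :
    ∑ i ∈ Icc 1 n, f i = ∑ i ∈ Icc 1 n₀, f i + ∑ i ∈ Icc (n₀ + 1) (n - 1), f i + f n := by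
  have hn : n - 1 + 1 = n := by omega
  change ∑ i ∈ Icc (0 + 1) n, f i = ∑ i ∈ Icc (0 + 1) n₀, f i + _ + f n
  simp only [Icc_add_one_left_eq_Ioc]
  rw [← sum_Ioc_consecutive f (Nat.zero_le n₀) h.le, add_assoc,
    ← hn, sum_Ioc_succ_top (by omega), hn]

section Majorant

variable {P Q U : ℕ → ℝ} {R : ℝ} {n₀ n : ℕ}

theorem one_sub_mul_le_of_forall_lt_le (hQnn : ∀ n, 0 ≤ Q n) (hP0 : P 0 = 1)
    (hPpos : ∀ n, 0 < P n) (hrec : ∀ n : ℕ, 1 ≤ n → P n = ∑ i ∈ Icc 1 n, Q i * P (n - i))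
    (hR : 0 ≤ R) (hratio : ∀ n, n₀ < n → Q n / P n ≤ R)
    (hn : n₀ < n) (hPU : ∀ m < n, P m ≤ U m) :
    (1 - R) * P n ≤ ∑ i ∈ Icc 1 n₀, Q i * U (n - i) +
      ∑ i ∈ Icc (n₀ + 1) (n - 1), R * U i * U (n - i) := by
  have hQ_le {i : ℕ} (hi : n₀ < i) : Q i ≤ R * P i :=
    (div_le_iff₀ (hPpos i)).1 (hratio i hi)
  have hlow : ∑ i ∈ Icc 1 n₀, Q i * P (n - i) ≤ ∑ i ∈ Icc 1 n₀, Q i * U (n - i) := by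
    refine sum_le_sum fun i hi => ?_
    have := (mem_Icc.1 hi).1
    exact mul_le_mul_of_nonneg_left (hPU _ (by omega)) (hQnn i)
  have hmid : ∑ i ∈ Icc (n₀ + 1) (n - 1), Q i * P (n - i) ≤
      ∑ i ∈ Icc (n₀ + 1) (n - 1), R * U i * U (n - i) := by
    refine sum_le_sum fun i hi => ?_
    obtain ⟨hi₁, hi₂⟩ := mem_Icc.1 hi
    have hUi : P i ≤ U i := hPU i (by omega)
    have hQU : Q i ≤ R * U i := (hQ_le (by omega)).trans (mul_le_mul_of_nonneg_left hUi hR)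
    exact mul_le_mul hQU (hPU _ (by omega)) (hPpos _).le ((hQnn i).trans hQU)
  have htop : Q n * P 0 ≤ R * P n := by simpa [hP0] using hQ_le hn
  have hsplit : P n = ∑ i ∈ Icc 1 n₀, Q i * P (n - i) +
      ∑ i ∈ Icc (n₀ + 1) (n - 1), Q i * P (n - i) + Q n * P 0 := by
    rw [hrec n (by omega), sum_Icc_one_eq_add_add _ hn, Nat.sub_self]
  linarith

end Majorant

theorem stmt9_general (n₀ : ℕ) (P Q U : ℕ → ℝ)
    (hQnn : ∀ n, 0 ≤ Q n) (hP0 : P 0 = 1)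
    (hPpos : ∀ n, 0 < P n)
    (hrec : ∀ n : ℕ, 1 ≤ n → P n = ∑ i ∈ Finset.Icc 1 n, Q i * P (n - i))
    (R : ℝ) (hR1 : R < 1)
    (hratio : ∀ n, n₀ < n → Q n / P n ≤ R)
    (hU1 : ∀ n, n ≤ n₀ → U n = P n)
    (hU2 : ∀ n, n₀ < n → U n = (1 / (1 - R)) *
      (∑ i ∈ Finset.Icc 1 n₀, Q i * U (n - i) +
        ∑ i ∈ Finset.Icc (n₀ + 1) (n - 1), R * U i * U (n - i))) :
    ∀ n : ℕ, P n ≤ U n := by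
  have hR : 0 ≤ R :=
    (div_nonneg (hQnn _) (hPpos _).le).trans (hratio (n₀ + 1) n₀.lt_succ_self)
  intro n
  induction n using Nat.strong_induction_on with
  | _ n ih =>
    rcases le_or_gt n n₀ with hn | hn
    · exact (hU1 n hn).ge
    · rw [hU2 n hn, one_div, inv_mul_eq_div, le_div_iff₀ (sub_pos.2 hR1), mul_comm]
      exact one_sub_mul_le_of_forall_lt_le hQnn hP0 hPpos hrec hR hratio hn ih

theorem stmt9 (n₀ : ℕ) (hn₀ : 1 ≤ n₀) (P Q U : ℕ → ℝ)
    (hQnn : ∀ n, 0 ≤ Q n) (hP0 : P 0 = 1) (hQ0 : Q 0 = 1)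
    (hPpos : ∀ n, 0 < P n)
    (hrec : ∀ n : ℕ, 1 ≤ n → P n = ∑ i ∈ Finset.Icc 1 n, Q i * P (n - i))
    (R : ℝ) (hR : R = Q n₀ / P n₀) (hR1 : R < 1)
    (hratio : ∀ n, n₀ < n → Q n / P n ≤ R)
    (hU1 : ∀ n, n ≤ n₀ → U n = P n)
    (hU2 : ∀ n, n₀ < n → U n = (1 / (1 - R)) *
      (∑ i ∈ Finset.Icc 1 n₀, Q i * U (n - i) +
        ∑ i ∈ Finset.Icc (n₀ + 1) (n - 1), R * U i * U (n - i))) :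
    ∀ n : ℕ, P n ≤ U n :=
  stmt9_general n₀ P Q U hQnn hP0 hPpos hrec R hR1 hratio hU1 hU2
end

section
/- Let U : ℕ → ℝ be defined by U(n) = P(n) for n ≤ n₀ and U(n) = Σ_{i=1}^{n₀} Q(i)·U(n-i) + Σ_{i=n₀+1}^{n} R·U(i)·U(n-i) for n > n₀, where R = Q(n₀)/P(n₀) < 1. Then the formal power series f(x) = Σ_{n≥0} U(n)x^n satisfies the quadratic equation R·f(x)² + (g(x) - 2)·f(x) + 1 = 0, where g(x) = Σ_{i=0}^{n₀} (Q(i) - R·P(i))·x^i. -/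
/-!
Put `K = g + R f - 1`. Its constant term vanishes because `Q 0 = P 0 = 1`, and for `i ≥ 1` its
`i`-th coefficient is `Q i` when `i ≤ n₀` (there `U i = P i`) and `R U i` beyond. Both defining
recursions of `U`, and the recursion of `P` below `n₀`, then read `U n = ∑_{i=1}^n K_i U (n - i)`
for `n ≥ 1`, that is `f = 1 + K f`, which rearranges to the quadratic equation.
-/

open Finset PowerSeries

theorem PowerSeries.mk_eq_one_add_mul_mk {R : Type*} [Semiring R] {a : ℕ → R} {h : R⟦X⟧}
    (h0 : constantCoeff h = 0) (ha0 : a 0 = 1)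
    (ha : ∀ n, 0 < n → a n = ∑ i ∈ Icc 1 n, coeff i h * a (n - i)) :
    mk a = 1 + h * mk a := by
  ext n
  rw [map_add, coeff_mul,
    Nat.sum_antidiagonal_eq_sum_range_succ (fun i j => coeff i h * coeff j (mk a)),
    Nat.range_succ_eq_Icc_zero, ← insert_Icc_add_one_left_eq_Icc n.zero_le,
    sum_insert (by simp), coeff_zero_eq_constantCoeff_apply, h0, zero_mul, zero_add, coeff_one]
  rcases Nat.eq_zero_or_pos n with rfl | hn
  · simp [ha0]
  · simp [hn.ne', ha n hn]

theorem PowerSeries.coeff_sum_range_C_mul_X_pow {R : Type*} [Semiring R] (a : ℕ → R) (N j : ℕ) :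
    coeff j (∑ i ∈ range N, C (a i) * X ^ i) = if j < N then a j else 0 := by
  simp [map_sum]

theorem eq_sum_Icc_kernel_mul {n₀ : ℕ} {P Q U : ℕ → ℝ} {R : ℝ}
    (hrec : ∀ n : ℕ, 1 ≤ n → n ≤ n₀ → P n = ∑ i ∈ Icc 1 n, Q i * P (n - i))
    (hU1 : ∀ n, n ≤ n₀ → U n = P n)
    (hU2 : ∀ n, n₀ < n → U n = ∑ i ∈ Icc 1 n₀, Q i * U (n - i) +
      ∑ i ∈ Icc (n₀ + 1) n, R * U i * U (n - i))
    {n : ℕ} (hn : 0 < n) :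
    U n = ∑ i ∈ Icc 1 n, (if i ≤ n₀ then Q i else R * U i) * U (n - i) := by
  rcases le_or_gt n n₀ with hle | hlt
  · rw [hU1 n hle, hrec n hn hle]
    refine sum_congr rfl fun i hi => ?_
    have hi := mem_Icc.1 hi
    rw [if_pos (hi.2.trans hle), hU1 (n - i) ((Nat.sub_le n i).trans hle)]
  · have hlow : {i ∈ Icc 1 n | i ≤ n₀} = Icc 1 n₀ := by ext; simp; omega
    have hhigh : {i ∈ Icc 1 n | ¬i ≤ n₀} = Icc (n₀ + 1) n := by ext; simp; omega
    simp only [ite_mul, sum_ite, hlow, hhigh]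
    exact hU2 n hlt

theorem stmt10_general (n₀ : ℕ) (P Q U : ℕ → ℝ)
    (hP0 : P 0 = 1) (hQ0 : Q 0 = 1)
    (hrec : ∀ n : ℕ, 1 ≤ n → n ≤ n₀ → P n = ∑ i ∈ Finset.Icc 1 n, Q i * P (n - i))
    (R : ℝ)
    (hU1 : ∀ n, n ≤ n₀ → U n = P n)
    (hU2 : ∀ n, n₀ < n → U n = ∑ i ∈ Finset.Icc 1 n₀, Q i * U (n - i) +
      ∑ i ∈ Finset.Icc (n₀ + 1) n, R * U i * U (n - i))
    (f g : PowerSeries ℝ)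
    (hf : f = PowerSeries.mk U)
    (hg : g = ∑ i ∈ Finset.range (n₀ + 1),
      PowerSeries.C (R := ℝ) (Q i - R * P i) * PowerSeries.X ^ i) :
    PowerSeries.C (R := ℝ) R * f ^ 2 + (g - 2) * f + 1 = 0 := by
  subst hf
  have hU0 : U 0 = 1 := by rw [hU1 0 n₀.zero_le, hP0]
  have hg_coeff (i : ℕ) : coeff i g = if i ≤ n₀ then Q i - R * P i else 0 := by
    rw [hg, coeff_sum_range_C_mul_X_pow]
    simp only [Nat.lt_succ_iff]
  have hkernel_const : constantCoeff (g + C R * mk U - 1) = 0 := by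
    rw [← coeff_zero_eq_constantCoeff_apply, map_sub, map_add, coeff_C_mul, hg_coeff, coeff_mk,
      coeff_one, if_pos rfl, if_pos n₀.zero_le, hU0, hP0, hQ0]
    ring
  have hkernel_coeff (i : ℕ) (hi : 0 < i) :
      coeff i (g + C R * mk U - 1) = if i ≤ n₀ then Q i else R * U i := by
    simp only [map_sub, map_add, coeff_C_mul, hg_coeff, coeff_mk, coeff_one, if_neg hi.ne']
    split_ifs with hin
    · rw [hU1 i hin]; ring
    · ring
  have hfix : mk U = 1 + (g + C R * mk U - 1) * mk U := by
    refine mk_eq_one_add_mul_mk hkernel_const hU0 fun n hn => ?_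
    rw [eq_sum_Icc_kernel_mul hrec hU1 hU2 hn]
    exact sum_congr rfl fun i hi => by rw [hkernel_coeff i (mem_Icc.1 hi).1]
  linear_combination -hfix

theorem stmt10 (n₀ : ℕ) (hn₀ : 1 ≤ n₀) (P Q U : ℕ → ℝ)
    (hP0 : P 0 = 1) (hQ0 : Q 0 = 1)
    (hrec : ∀ n : ℕ, 1 ≤ n → n ≤ n₀ → P n = ∑ i ∈ Finset.Icc 1 n, Q i * P (n - i))
    (R : ℝ) (hR : R = Q n₀ / P n₀) (hR1 : R < 1)
    (hU1 : ∀ n, n ≤ n₀ → U n = P n)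
    (hU2 : ∀ n, n₀ < n → U n = ∑ i ∈ Finset.Icc 1 n₀, Q i * U (n - i) +
      ∑ i ∈ Finset.Icc (n₀ + 1) n, R * U i * U (n - i))
    (f g : PowerSeries ℝ)
    (hf : f = PowerSeries.mk U)
    (hg : g = ∑ i ∈ Finset.range (n₀ + 1),
      PowerSeries.C (R := ℝ) (Q i - R * P i) * PowerSeries.X ^ i) :
    PowerSeries.C (R := ℝ) R * f ^ 2 + (g - 2) * f + 1 = 0 :=
  stmt10_general n₀ P Q U hP0 hQ0 hrec R hU1 hU2 f g hf hg
end

section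
/- Every polyomino with n ≥ 2 cells can be partitioned into two nonempty sets of cells A and B, each of which is itself a polyomino (i.e., connected), such that (n-1)/4 ≤ |A| ≤ (3n+1)/4. -/
/-- Grid adjacency of two cells of `ℤ × ℤ`. -/
def CellAdj (p q : ℤ × ℤ) : Prop :=
  (p.1 = q.1 ∧ (p.2 = q.2 + 1 ∨ q.2 = p.2 + 1)) ∨
  (p.2 = q.2 ∧ (p.1 = q.1 + 1 ∨ q.1 = p.1 + 1))

/-- A polyomino: a nonempty finite set of cells whose adjacency graph is connected. -/
def IsPolyomino (S : Finset (ℤ × ℤ)) : Prop :=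
  S.Nonempty ∧ ∀ p ∈ S, ∀ q ∈ S,
    Relation.ReflTransGen (fun a b => a ∈ S ∧ b ∈ S ∧ CellAdj a b) p q

/-! Fix a spanning tree of the adjacency graph, rooted anywhere. Cutting the tree edge above a
vertex `w` splits the cells into the subtree of `w` and its complement, both connected. Let `c`
have the smallest subtree among the vertices whose complement has fewer than `(n - 1) / 4`
cells (the root is one). The subtrees of the children of `c` are then not of that kind, and
together with `c` they cover the subtree of `c`. As `c` has at most four children, and at most
three unless it is the root, the largest child subtree has at least `(n - 1) / 4` cells. -/

open Relation Finset

section ConnectedOn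

variable {α : Type*} {R : α → α → Prop}

def ConnectedOn (R : α → α → Prop) (S : Finset α) : Prop :=
  ∀ p ∈ S, ∀ q ∈ S, ReflTransGen (fun a b => a ∈ S ∧ b ∈ S ∧ R a b) p q

lemma ConnectedOn.of_forall_reflTransGen [Std.Symm R] {A : Finset α} {t : α}
    (h : ∀ v ∈ A, ReflTransGen (fun a b => a ∈ A ∧ b ∈ A ∧ R a b) v t) : ConnectedOn R A := by
  have : Std.Symm (fun a b => a ∈ A ∧ b ∈ A ∧ R a b) :=
    ⟨fun _ _ ⟨ha, hb, hab⟩ => ⟨hb, ha, symm hab⟩⟩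
  exact fun p hp q hq => (h p hp).trans (symm (h q hq))

lemma Relation.ReflTransGen.exists_mem_notMem {r : α → α → Prop} {T : Finset α} {p q : α}
    (h : ReflTransGen r p q) (hp : p ∈ T) (hq : q ∉ T) : ∃ a ∈ T, ∃ b ∉ T, r a b := by
  induction h with
  | refl => exact absurd hp hq
  | @tail b c _ hbc ih =>
    by_cases hb : b ∈ T
    · exact ⟨b, hb, c, hq, hbc⟩
    · exact ih hb

end ConnectedOn

/-- `f` is the parent map of a spanning tree of `S` rooted at `r`. The rank `d` strictly decreases
along parent edges, which is what makes the tree acyclic. -/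
structure IsRootedTree {α : Type*} (R : α → α → Prop) (S : Finset α) (r : α) (f : α → α)
    (d : α → ℕ) : Prop where
  root_mem : r ∈ S
  map_root : f r = r
  parent : ∀ v ∈ S, v ≠ r → f v ∈ S ∧ R v (f v) ∧ d (f v) < d v

namespace IsRootedTree

variable {α : Type*} {R : α → α → Prop} {S : Finset α} {r : α} {f : α → α} {d : α → ℕ}

lemma singleton (R : α → α → Prop) (r : α) : IsRootedTree R {r} r id (fun _ => 0) :=
  ⟨mem_singleton_self r, rfl, fun _ hv hvr => absurd (mem_singleton.1 hv) hvr⟩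

lemma insert_leaf [DecidableEq α] (h : IsRootedTree R S r f d) {a b : α} (ha : a ∈ S) (hb : b ∉ S)
    (hba : R b a) :
    IsRootedTree R (insert b S) r (Function.update f b a) (Function.update d b (d a + 1)) := by
  have hne : ∀ v ∈ S, v ≠ b := fun v hv hvb => hb (hvb ▸ hv)
  refine ⟨mem_insert_of_mem h.root_mem, ?_, ?_⟩
  · rw [Function.update_of_ne (hne r h.root_mem), h.map_root]
  · rintro v hv hvr
    rcases mem_insert.1 hv with rfl | hvS
    · simp [ha, hba, hne a ha]
    · obtain ⟨hfv, hR, hd⟩ := h.parent v hvS hvr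
      simp [Function.update_of_ne (hne v hvS), Function.update_of_ne (hne _ hfv), hfv, hR, hd]

lemma map_mem (h : IsRootedTree R S r f d) {v : α} (hv : v ∈ S) : f v ∈ S := by
  by_cases hvr : v = r
  · rw [hvr, h.map_root]; exact h.root_mem
  · exact (h.parent v hv hvr).1

lemma iterate_mem (h : IsRootedTree R S r f d) {v : α} (hv : v ∈ S) (k : ℕ) : f^[k] v ∈ S := by
  induction k with
  | zero => exact hv
  | succ k ih => rw [Function.iterate_succ_apply']; exact h.map_mem ih

lemma rank_map_le (h : IsRootedTree R S r f d) {v : α} (hv : v ∈ S) : d (f v) ≤ d v := by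
  by_cases hvr : v = r
  · rw [hvr, h.map_root]
  · exact (h.parent v hv hvr).2.2.le

lemma rank_iterate_le (h : IsRootedTree R S r f d) {v : α} (hv : v ∈ S) (k : ℕ) :
    d (f^[k] v) ≤ d v := by
  induction k with
  | zero => rfl
  | succ k ih =>
    rw [Function.iterate_succ_apply']
    exact (h.rank_map_le (h.iterate_mem hv k)).trans ih

lemma exists_iterate_eq_root (h : IsRootedTree R S r f d) {v : α} (hv : v ∈ S) :
    ∃ k, f^[k] v = r := by
  induction hd : d v using Nat.strong_induction_on generalizing v with
  | _ n ih =>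
    by_cases hvr : v = r
    · exact ⟨0, hvr⟩
    · obtain ⟨hfv, -, hlt⟩ := h.parent v hv hvr
      obtain ⟨k, hk⟩ := ih _ (hd ▸ hlt) hfv rfl
      exact ⟨k + 1, hk⟩

end IsRootedTree

theorem ConnectedOn.exists_isRootedTree {α : Type*} {R : α → α → Prop} [Std.Symm R]
    {S : Finset α} (hS : ConnectedOn R S) {r : α} (hr : r ∈ S) :
    ∃ f d, IsRootedTree R S r f d := by
  classical
  obtain ⟨T, hT, hmax⟩ := exists_max_image
    (S.powerset.filter fun T => ∃ f d, IsRootedTree R T r f d) card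
    ⟨{r}, mem_filter.2 ⟨by simpa using hr, _, _, IsRootedTree.singleton R r⟩⟩
  obtain ⟨hTS, f, d, hTtree⟩ := mem_filter.1 hT
  rw [mem_powerset] at hTS
  suffices hTS' : S ⊆ T by exact ⟨f, d, subset_antisymm hTS hTS' ▸ hTtree⟩
  intro q hqS
  by_contra hqT
  obtain ⟨a, haT, b, hbT, -, hbS, hab⟩ :=
    (hS r hr q hqS).exists_mem_notMem hTtree.root_mem hqT
  have := hmax (insert b T) (mem_filter.2 ⟨mem_powerset.2 (insert_subset hbS hTS), _, _,
    hTtree.insert_leaf haT hbT (symm hab)⟩)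
  rw [card_insert_of_notMem hbT] at this
  omega

open Classical in
noncomputable def subtree {α : Type*} (S : Finset α) (f : α → α) (v : α) : Finset α :=
  S.filter fun u => ∃ k, f^[k] u = v

open Classical in
noncomputable def children {α : Type*} (S : Finset α) (f : α → α) (c : α) : Finset α :=
  S.filter fun w => w ≠ c ∧ f w = c

section Subtree

variable {α : Type*} {S : Finset α} {f : α → α}

lemma mem_subtree {u v : α} : u ∈ subtree S f v ↔ u ∈ S ∧ ∃ k, f^[k] u = v := by
  classical exact mem_filter

lemma mem_children {w c : α} : w ∈ children S f c ↔ w ∈ S ∧ w ≠ c ∧ f w = c := by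
  classical exact mem_filter

lemma subtree_subset (v : α) : subtree S f v ⊆ S := fun _ hu => (mem_subtree.1 hu).1

lemma self_mem_subtree {v : α} (hv : v ∈ S) : v ∈ subtree S f v := mem_subtree.2 ⟨hv, 0, rfl⟩

end Subtree

namespace IsRootedTree

variable {α : Type*} {R : α → α → Prop} {S : Finset α} {r : α} {f : α → α} {d : α → ℕ}

lemma subtree_root (h : IsRootedTree R S r f d) : subtree S f r = S :=
  subset_antisymm (subtree_subset r) fun _ hv => mem_subtree.2 ⟨hv, h.exists_iterate_eq_root hv⟩

lemma connectedOn_of_iterate_eq [Std.Symm R] (h : IsRootedTree R S r f d) {A : Finset α}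
    {t : α} (hAS : A ⊆ S) (hA : ∀ v ∈ A, v ≠ t → f v ∈ A) (ht : ∀ v ∈ A, ∃ k, f^[k] v = t) :
    ConnectedOn R A := by
  refine ConnectedOn.of_forall_reflTransGen (t := t) fun v hv => ?_
  obtain ⟨k, hk⟩ := ht v hv
  induction k generalizing v with
  | zero => exact hk ▸ .refl
  | succ k ih =>
    by_cases hvt : v = t
    · exact hvt ▸ .refl
    have hvr : v ≠ r := by
      rintro rfl
      exact hvt (by rwa [Function.iterate_fixed h.map_root] at hk)
    exact .head ⟨hv, hA v hv hvt, (h.parent v (hAS hv) hvr).2.1⟩ (ih (f v) (hA v hv hvt) hk)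

lemma connectedOn_subtree [Std.Symm R] (h : IsRootedTree R S r f d) (u : α) :
    ConnectedOn R (subtree S f u) := by
  refine h.connectedOn_of_iterate_eq (subtree_subset u) (fun v hv hvu => ?_)
    (fun v hv => (mem_subtree.1 hv).2)
  obtain ⟨hvS, k, hk⟩ := mem_subtree.1 hv
  obtain ⟨k, rfl⟩ : ∃ j, k = j + 1 := Nat.exists_eq_succ_of_ne_zero (by rintro rfl; exact hvu hk)
  exact mem_subtree.2 ⟨h.map_mem hvS, k, hk⟩

lemma connectedOn_sdiff_subtree [Std.Symm R] [DecidableEq α] (h : IsRootedTree R S r f d)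
    (u : α) : ConnectedOn R (S \ subtree S f u) := by
  refine h.connectedOn_of_iterate_eq sdiff_subset (fun v hv _ => ?_)
    (fun v hv => h.exists_iterate_eq_root (mem_sdiff.1 hv).1)
  obtain ⟨hvS, hvu⟩ := mem_sdiff.1 hv
  refine mem_sdiff.2 ⟨h.map_mem hvS, fun hfv => hvu ?_⟩
  obtain ⟨-, k, hk⟩ := mem_subtree.1 hfv
  exact mem_subtree.2 ⟨hvS, k + 1, hk⟩

lemma ne_root_of_mem_children (h : IsRootedTree R S r f d) {w c : α}
    (hw : w ∈ children S f c) : w ≠ r := by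
  obtain ⟨-, hwc, hfw⟩ := mem_children.1 hw
  rintro rfl
  exact hwc (hfw ▸ h.map_root).symm

lemma card_subtree_lt_of_mem_children (h : IsRootedTree R S r f d) {w c : α}
    (hw : w ∈ children S f c) : (subtree S f w).card < (subtree S f c).card := by
  obtain ⟨hwS, -, hfw⟩ := mem_children.1 hw
  have hcS : c ∈ S := hfw ▸ h.map_mem hwS
  refine card_lt_card (ssubset_of_subset_of_ne ?_ ?_)
  · intro u hu
    obtain ⟨huS, k, hk⟩ := mem_subtree.1 hu
    exact mem_subtree.2 ⟨huS, k + 1, by rw [Function.iterate_succ_apply', hk, hfw]⟩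
  · intro heq
    obtain ⟨-, k, hk⟩ := mem_subtree.1 (heq ▸ self_mem_subtree hcS)
    have hlt := hfw ▸ (h.parent w hwS (h.ne_root_of_mem_children hw)).2.2
    exact absurd (hk ▸ h.rank_iterate_le hcS k) (not_le.2 hlt)

lemma card_subtree_le_one_add_sum (h : IsRootedTree R S r f d) (c : α) :
    (subtree S f c).card ≤ 1 + ∑ w ∈ children S f c, (subtree S f w).card := by
  classical
  suffices hsub : subtree S f c ⊆ insert c ((children S f c).biUnion (subtree S f)) from
    calc (subtree S f c).card ≤ _ := card_le_card hsub
      _ ≤ _ := card_insert_le _ _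
      _ ≤ _ := by rw [add_comm]; gcongr; exact card_biUnion_le
  intro u hu
  obtain ⟨huS, hreach⟩ := mem_subtree.1 hu
  by_cases huc : u = c
  · exact huc ▸ mem_insert_self u _
  have hk : Nat.find hreach ≠ 0 := fun h0 => huc (by simpa [h0] using Nat.find_spec hreach)
  obtain ⟨k, hk'⟩ : ∃ k, Nat.find hreach = k + 1 := Nat.exists_eq_succ_of_ne_zero hk
  have hw : f^[k] u ∈ children S f c := by
    refine mem_children.2 ⟨h.iterate_mem huS k, fun hwc => ?_, ?_⟩
    · exact Nat.find_min hreach (hk' ▸ Nat.lt_succ_self k) hwc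
    · rw [← Function.iterate_succ_apply' f k u, Nat.succ_eq_add_one, ← hk']
      exact Nat.find_spec hreach
  exact mem_insert_of_mem (mem_biUnion.2 ⟨_, hw, mem_subtree.2 ⟨huS, k, rfl⟩⟩)

lemma children_subset_filter [Std.Symm R] [DecidableRel R] (h : IsRootedTree R S r f d) (c : α) :
    children S f c ⊆ S.filter (R c) := by
  intro w hw
  obtain ⟨hwS, -, hfw⟩ := mem_children.1 hw
  exact mem_filter.2 ⟨hwS, symm (hfw ▸ (h.parent w hwS (h.ne_root_of_mem_children hw)).2.1)⟩

lemma card_children_lt [Std.Symm R] [DecidableRel R] (h : IsRootedTree R S r f d) {c : α}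
    (hc : c ∈ S) (hcr : c ≠ r) : (children S f c).card < (S.filter (R c)).card := by
  classical
  obtain ⟨hfc, hcfc, hdc⟩ := h.parent c hc hcr
  have hfc_notMem : f c ∉ children S f c := by
    intro hmem
    obtain ⟨-, -, hffc⟩ := mem_children.1 hmem
    have := (h.parent (f c) hfc (h.ne_root_of_mem_children hmem)).2.2
    rw [hffc] at this
    omega
  calc (children S f c).card < (insert (f c) (children S f c)).card :=
        by rw [card_insert_of_notMem hfc_notMem]; omega
    _ ≤ (S.filter (R c)).card :=
        card_le_card (insert_subset (mem_filter.2 ⟨hfc, hcfc⟩) (h.children_subset_filter c))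

end IsRootedTree

lemma Nat.le_mul_add_one_of_le_one_add_mul_add {n u k m Δ : ℕ} (hn : n ≤ 1 + k * m + u)
    (hk : k ≤ Δ) (hku : 0 < u → k < Δ) (hu : Δ * u + 1 < n) : n ≤ Δ * m + 1 := by
  rcases u.eq_zero_or_pos with rfl | hu0
  · nlinarith [Nat.mul_le_mul_right m hk]
  · have hk' := hku hu0
    nlinarith [Nat.mul_le_mul_right u hk', Nat.mul_le_mul_right m hk']

theorem IsRootedTree.exists_balanced_subtree {α : Type*} {R : α → α → Prop} [Std.Symm R]
    [DecidableRel R] [DecidableEq α] {S : Finset α} {r : α} {f : α → α} {d : α → ℕ}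
    (h : IsRootedTree R S r f d) {Δ : ℕ} (hdeg : ∀ v ∈ S, (S.filter (R v)).card ≤ Δ)
    (hn : 2 ≤ S.card) :
    ∃ w, S.card ≤ Δ * (subtree S f w).card + 1 ∧ S.card ≤ Δ * (S \ subtree S f w).card + 1 := by
  set Q := S.filter fun v => Δ * (S \ subtree S f v).card + 1 < S.card
  have hrQ : r ∈ Q := mem_filter.2 ⟨h.root_mem, by simp [h.subtree_root]; omega⟩
  obtain ⟨c, hcQ, hcmin⟩ := exists_min_image Q (fun v => (subtree S f v).card) ⟨r, hrQ⟩
  obtain ⟨hcS, hcsmall⟩ := mem_filter.1 hcQ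
  have hchild : ∀ w ∈ children S f c, S.card ≤ Δ * (S \ subtree S f w).card + 1 := by
    intro w hw
    by_contra hlt
    have := hcmin w (mem_filter.2 ⟨(mem_children.1 hw).1, not_le.1 hlt⟩)
    exact absurd (h.card_subtree_lt_of_mem_children hw) (not_lt.2 this)
  have hsplit := card_sdiff_add_card_eq_card (subtree_subset (S := S) (f := f) c)
  have hk : (children S f c).card ≤ Δ :=
    (card_le_card (h.children_subset_filter c)).trans (hdeg c hcS)
  have hku : 0 < (S \ subtree S f c).card → (children S f c).card < Δ := by
    intro hpos
    have hcr : c ≠ r := by rintro rfl; simp [h.subtree_root] at hpos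
    exact (h.card_children_lt hcS hcr).trans_le (hdeg c hcS)
  have hcard : ∀ m, (∀ w ∈ children S f c, (subtree S f w).card ≤ m) →
      S.card ≤ 1 + (children S f c).card * m + (S \ subtree S f c).card := by
    intro m hm
    have := (h.card_subtree_le_one_add_sum c).trans
      (add_le_add_right (sum_le_card_nsmul _ _ m hm) 1)
    rw [smul_eq_mul] at this
    omega
  rcases (children S f c).eq_empty_or_nonempty with hempty | hne
  · have := Nat.le_mul_add_one_of_le_one_add_mul_add (hcard 0 (by simp [hempty])) hk hku hcsmall
    omega
  · obtain ⟨w, hw, hwmax⟩ := exists_max_image _ (fun w => (subtree S f w).card) hne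
    exact ⟨w, Nat.le_mul_add_one_of_le_one_add_mul_add (hcard _ hwmax) hk hku hcsmall,
      hchild w hw⟩

theorem ConnectedOn.exists_balanced_split {α : Type*} {R : α → α → Prop} [Std.Symm R]
    [DecidableRel R] [DecidableEq α] {S : Finset α} (hS : ConnectedOn R S) {Δ : ℕ}
    (hdeg : ∀ v ∈ S, (S.filter (R v)).card ≤ Δ) (hn : 2 ≤ S.card) :
    ∃ A ⊆ S, ConnectedOn R A ∧ ConnectedOn R (S \ A) ∧
      S.card ≤ Δ * A.card + 1 ∧ S.card ≤ Δ * (S \ A).card + 1 := by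
  obtain ⟨r, hr⟩ := card_pos.1 (by omega : 0 < S.card)
  obtain ⟨f, d, h⟩ := hS.exists_isRootedTree hr
  obtain ⟨w, hw⟩ := h.exists_balanced_subtree hdeg hn
  exact ⟨subtree S f w, subtree_subset w, h.connectedOn_subtree w,
    h.connectedOn_sdiff_subtree w, hw⟩

lemma isPolyomino_iff {S : Finset (ℤ × ℤ)} : IsPolyomino S ↔ S.Nonempty ∧ ConnectedOn CellAdj S :=
  Iff.rfl

instance : Std.Symm CellAdj := ⟨fun p q h => by unfold CellAdj at *; omega⟩

instance : DecidableRel CellAdj := fun p q => by unfold CellAdj; infer_instance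

lemma card_filter_cellAdj_le_four (S : Finset (ℤ × ℤ)) (c : ℤ × ℤ) :
    (S.filter (CellAdj c)).card ≤ 4 := by
  refine (card_le_card fun q hq => ?_).trans
    (card_le_four (a := (c.1 + 1, c.2)) (b := (c.1 - 1, c.2)) (c := (c.1, c.2 + 1))
      (d := (c.1, c.2 - 1)))
  have := (mem_filter.1 hq).2
  unfold CellAdj at this
  simp only [mem_insert, mem_singleton, Prod.ext_iff]
  omega

theorem stmt19 (S : Finset (ℤ × ℤ)) (hS : IsPolyomino S)
    (n : ℕ) (hn : S.card = n) (h2 : 2 ≤ n) :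
    ∃ A B : Finset (ℤ × ℤ), A.Nonempty ∧ B.Nonempty ∧ A ∪ B = S ∧ Disjoint A B ∧
      IsPolyomino A ∧ IsPolyomino B ∧
      ((n : ℝ) - 1) / 4 ≤ (A.card : ℝ) ∧ (A.card : ℝ) ≤ (3 * (n : ℝ) + 1) / 4 := by
  obtain ⟨A, hAS, hA, hB, hnA, hnB⟩ := (isPolyomino_iff.1 hS).2.exists_balanced_split
    (fun v _ => card_filter_cellAdj_le_four S v) (hn ▸ h2)
  have hsplit := card_sdiff_add_card_eq_card hAS
  have hA0 : A.Nonempty := card_pos.1 (by omega)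
  have hB0 : (S \ A).Nonempty := card_pos.1 (by omega)
  have hupper : 4 * A.card ≤ 3 * n + 1 := by omega
  refine ⟨A, S \ A, hA0, hB0, union_sdiff_of_subset hAS, disjoint_sdiff,
    isPolyomino_iff.2 ⟨hA0, hA⟩, isPolyomino_iff.2 ⟨hB0, hB⟩, ?_, ?_⟩
  · have : (n : ℝ) ≤ 4 * A.card + 1 := by exact_mod_cast hn ▸ hnA
    linarith
  · have : (4 * A.card : ℝ) ≤ 3 * n + 1 := by exact_mod_cast hupper
    linarith
end
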